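/- The simplification of the contraction N/{6}, with the element {10,12} deleted, is isomorphic to the Fano matroid F_7. -/
import Mathlib


def mLines : Set (Set (Fin 13)) :=
  {{0,3,9}, {0,4,7}, {0,5,6}, {8,9,10}, {7,10,11},
   {1,4,9}, {1,3,7}, {1,5,8}, {6,9,11}, {6,10,12},
   {2,5,9}, {2,3,6}, {2,4,8}, {7,9,12}, {8,11,12}}

def bigBlocks : Set (Set (Fin 13)) :=
  {{0,1,3,4,7,9,12}, {0,2,3,5,6,9,11}, {1,2,4,5,8,9,10}, {6,7,8,9,10,11,12},
   {0,3,8,9,10}, {1,4,6,9,11}, {2,5,7,9,12},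
   {0,4,5,6,7}, {1,2,3,6,7}, {0,1,5,6,8}, {2,3,4,6,8}, {0,2,4,7,8}, {1,3,5,7,8},
   {0,4,7,10,11}, {1,3,7,10,11}, {0,5,6,10,12}, {2,3,6,10,12}, {1,5,8,11,12},
   {2,4,8,11,12}, {0,8,11,12}, {1,6,10,12}, {2,7,10,11}, {3,8,11,12},
   {4,6,10,12}, {5,7,10,11}}

def IsN (N : Matroid (Fin 13)) : Prop :=
  N.E = Set.univ ∧ ∀ I : Set (Fin 13),
    N.Indep I ↔ I.encard ≤ 4 ∧ (∀ L ∈ mLines, ¬ L ⊆ I) ∧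
      ¬ ∃ Z ∈ bigBlocks, I ⊆ Z ∧ I.encard = 4

/-- `Q` is the contraction `N ∕ {6}`: a set is independent in `Q` iff it avoids `6`
and together with `6` is independent in `N`. -/
def IsContractionBySix (Q N : Matroid (Fin 13)) : Prop :=
  Q.E = N.E \ {6} ∧ ∀ I : Set (Fin 13), Q.Indep I ↔ 6 ∉ I ∧ N.Indep (insert 6 I)

def fanoLines : Set (Set (Fin 7)) :=
  {{0,1,5}, {0,2,4}, {0,3,6}, {1,2,3}, {1,4,6}, {2,5,6}, {3,4,5}}

/-- Representatives of the parallel classes of `N ∕ {6}` other than `[10,12]`: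
`0 = [0,5]`, `1 = [1]`, `2 = [2,3]`, `4 = [4]`, `7 = [7]`, `8 = [8]`, `9 = [9,11]`. -/
def reps : Set (Fin 13) := {0, 1, 2, 4, 7, 8, 9}

/-- The identification of the Fano ground set with the representatives:
`0 ↦ [0,5]`, `1 ↦ [1]`, `2 ↦ [2,3]`, `3 ↦ [7]`, `4 ↦ [9,11]`, `5 ↦ [8]`, `6 ↦ [4]`. -/
def toReps : Fin 7 → Fin 13 := ![0, 1, 2, 7, 9, 8, 4]

private lemma castEqFour (m : ℕ) : (m : ℕ∞) = 4 ↔ m = 4 := by norm_cast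

set_option maxHeartbeats 4000000 in
set_option maxRecDepth 100000 in
set_option synthInstance.maxHeartbeats 2000000 in
set_option synthInstance.maxSize 2000 in
/-- The simplification of the contraction `N ∕ {6}` with the point `[10,12]` deleted
(realized as the restriction of `N ∕ {6}` to the representatives `reps`) is
isomorphic to the Fano matroid `F₇`, via the bijection `toReps`. -/
theorem contraction_simplification_isFano (N Q : Matroid (Fin 13)) (hN : IsN N)
    (hQ : IsContractionBySix Q N) :
    Function.Injective toReps ∧ Set.range toReps = reps ∧
    ∀ I : Set (Fin 7),
      (Q.restrict reps).Indep (toReps '' I) ↔ I.encard ≤ 3 ∧ I ∉ fanoLines := by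
  obtain ⟨hNE, hNI⟩ := hN
  obtain ⟨hQE, hQI⟩ := hQ
  refine ⟨by decide, ?_, ?_⟩
  · simp only [Set.ext_iff, Set.mem_range, reps, Set.mem_insert_iff, Set.mem_singleton_iff]
    decide
  · intro I
    obtain ⟨s, rfl⟩ : ∃ s : Finset (Fin 7), I = ↑s := ⟨I.toFinite.toFinset, by simp⟩
    rw [Matroid.restrict_indep_iff, hQI, hNI]
    simp only [mLines, bigBlocks, fanoLines, reps, Set.mem_insert_iff, Set.mem_singleton_iff,
      forall_eq_or_imp, forall_eq, exists_eq_or_imp, exists_eq_left]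
    simp only [← Finset.coe_image, ← Finset.coe_insert, Set.encard_coe_eq_coe_finsetCard,
      Set.subset_def, Set.ext_iff, Set.mem_insert_iff, Set.mem_singleton_iff, Finset.mem_coe,
      Nat.cast_le_ofNat, castEqFour]
    revert s
    decide
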